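/- Let F ⊆ V_CC be a g-dimensional a_CC-isotropic subspace with h positive definite on F (a point of the Siegel space H(V)), and let I ⊆ V be a nonzero rational isotropic subspace. Then the projection F → V_CC/I_CC is injective, the projection F → V_CC/I^⊥_CC is surjective, and the kernel F ∩ I^⊥_CC of the latter projects isomorphically onto a subspace of (I^⊥/I)_CC that is isotropic and h-positive, i.e., defines a point of H(V_I). -/

import Mathlib

/-!
The form `a_ℂ` is symplectic and `F` is Lagrangian, so `Fᗮ = F`, while `I^⊥ᗮ = I_ℂ`.
A nonzero `v ∈ F ∩ I_ℂ` would have `h(v, v) = i·a(v, σ v) = 0`, since `σ v ∈ I_ℂ` and `I_ℂ` is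
isotropic; hence `F ∩ I_ℂ = 0`. Taking orthogonals, `(F + I^⊥)ᗮ = F ∩ I_ℂ = 0`, i.e.
`F + I^⊥ = V_ℂ`, and the dimension formula for `F ∩ I^⊥` follows by counting dimensions.
-/

open Module

namespace LinearMap.BilinForm

theorem orthogonal_sup {R M : Type*} [CommRing R] [AddCommGroup M] [Module R M]
    (B : LinearMap.BilinForm R M) (N L : Submodule R M) :
    B.orthogonal (N ⊔ L) = B.orthogonal N ⊓ B.orthogonal L := by
  refine le_antisymm (le_inf (orthogonal_le le_sup_left) (orthogonal_le le_sup_right)) ?_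
  rintro x ⟨hxN, hxL⟩ _ hy
  obtain ⟨n, hn, l, hl, rfl⟩ := Submodule.mem_sup.mp hy
  have hnx : B n x = 0 := hxN n hn
  have hlx : B l x = 0 := hxL l hl
  show B (n + l) x = 0
  rw [map_add, LinearMap.add_apply, hnx, hlx, add_zero]

theorem inf_eq_bot_of_isotropic_of_apply_self_ne_zero {R M : Type*} [CommRing R]
    [AddCommGroup M] [Module R M] (B : LinearMap.BilinForm R M) (σ : M → M) {F I : Submodule R M}
    (hF : ∀ v ∈ F, v ≠ 0 → B v (σ v) ≠ 0) (hI : ∀ v ∈ I, ∀ w ∈ I, B v w = 0)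
    (hIσ : ∀ v ∈ I, σ v ∈ I) : F ⊓ I = ⊥ := by
  refine (Submodule.eq_bot_iff _).mpr fun v ⟨hvF, hvI⟩ => ?_
  by_contra hv
  exact hF v hvF hv (hI v hvI (σ v) (hIσ v hvI))

variable {K V : Type*} [Field K] [AddCommGroup V] [Module K V] [FiniteDimensional K V]
  {B : LinearMap.BilinForm K V}

theorem orthogonal_eq_self_of_le_orthogonal (hB : B.Nondegenerate) {L : Submodule K V}
    (hiso : L ≤ B.orthogonal L) (hdim : finrank K V = 2 * finrank K L) :
    B.orthogonal L = L := by
  refine (Submodule.eq_of_le_of_finrank_le hiso ?_).symm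
  rw [finrank_orthogonal hB, hdim]
  omega

theorem sup_orthogonal_eq_top (hB : B.Nondegenerate) (hB₀ : B.IsRefl) {L N : Submodule K V}
    (hL : B.orthogonal L = L) (hLN : L ⊓ N = ⊥) : L ⊔ B.orthogonal N = ⊤ := by
  have h : B.orthogonal (L ⊔ B.orthogonal N) = ⊥ := by
    rw [orthogonal_sup, hL, orthogonal_orthogonal hB hB₀, hLN]
  rw [← orthogonal_orthogonal hB hB₀ (L ⊔ B.orthogonal N), h, orthogonal_bot]

theorem finrank_orthogonal_eq_two_mul_finrank_inf_add (hB : B.Nondegenerate)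
    {L N : Submodule K V} (hdim : finrank K V = 2 * finrank K L)
    (hsup : L ⊔ B.orthogonal N = ⊤) :
    finrank K (B.orthogonal N) = 2 * finrank K ↥(L ⊓ B.orthogonal N) + finrank K N := by
  have hsum := Submodule.finrank_sup_add_finrank_inf_eq L (B.orthogonal N)
  rw [hsup, finrank_top] at hsum
  rw [finrank_orthogonal hB] at hsum ⊢
  have := N.finrank_le
  omega

end LinearMap.BilinForm

open LinearMap.BilinForm

theorem siegel_space_boundary_projection_general
    (g : ℕ) (W : Type*) [AddCommGroup W] [Module ℂ W] [FiniteDimensional ℂ W]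
    (hdim : finrank ℂ W = 2 * g)
    (σ : W →ₛₗ[starRingEnd ℂ] W)
    (aC : W →ₗ[ℂ] W →ₗ[ℂ] ℂ)
    (halt : ∀ v, aC v v = 0)
    (hnd : ∀ v, (∀ w, aC v w = 0) → v = 0)
    (h : W → W → ℂ) (hdef : ∀ v w, h v w = Complex.I * aC v (σ w))
    -- the point `F ∈ H(V)`
    (F : Submodule ℂ W)
    (hFdim : finrank ℂ F = g)
    (hFiso : ∀ v ∈ F, ∀ w ∈ F, aC v w = 0)
    (hFpos : ∀ v ∈ F, v ≠ 0 → 0 < (h v v).re)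
    -- the complexification `I_ℂ` of a nonzero rational isotropic subspace `I ⊆ V`
    (I : Submodule ℂ W)
    (hIconj : I.map σ = I)
    (hIiso : ∀ v ∈ I, ∀ w ∈ I, aC v w = 0)
    (Iperp : Submodule ℂ W)
    (hIperp : ∀ x : W, x ∈ Iperp ↔ ∀ w ∈ I, aC x w = 0) :
    -- `F → W/I_ℂ` is injective
    F ⊓ I = ⊥ ∧
    -- `F → W/I^⊥_ℂ` is surjective
    F ⊔ Iperp = ⊤ ∧
    -- `F ∩ I^⊥_ℂ` maps injectively into `(I^⊥/I)_ℂ`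
    (F ⊓ Iperp) ⊓ I = ⊥ ∧
    -- the image has half the dimension of `(I^⊥/I)_ℂ`
    finrank ℂ Iperp = 2 * finrank ℂ ↥(F ⊓ Iperp) + finrank ℂ I ∧
    -- the image is isotropic and `h`-positive, i.e. defines a point of `H(V_I)`
    (∀ v ∈ F ⊓ Iperp, ∀ w ∈ F ⊓ Iperp, aC v w = 0) ∧
    (∀ v ∈ F ⊓ Iperp, v ∉ I → 0 < (h v v).re) := by
  have hrefl : aC.IsRefl := LinearMap.IsAlt.isRefl halt
  have hB : aC.Nondegenerate := hrefl.nondegenerate_iff_separatingLeft.mpr hnd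
  have hIperp_eq : Iperp = orthogonal aC I :=
    Submodule.ext fun x => (hIperp x).trans (forall₂_congr fun w _ => hrefl.eq_iff)
  subst hIperp_eq
  have hdimF : finrank ℂ W = 2 * finrank ℂ F := by rw [hFdim, hdim]
  have hFlag : orthogonal aC F = F :=
    orthogonal_eq_self_of_le_orthogonal hB (fun v hv w hw => hFiso w hw v hv) hdimF
  have hFI : F ⊓ I = ⊥ := by
    refine inf_eq_bot_of_isotropic_of_apply_self_ne_zero aC σ (fun v hv hv0 hzero => ?_) hIiso
      fun v hv => hIconj ▸ Submodule.mem_map_of_mem hv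
    simpa [hdef, hzero] using hFpos v hv hv0
  have hsup : F ⊔ orthogonal aC I = ⊤ := sup_orthogonal_eq_top hB hrefl hFlag hFI
  exact ⟨hFI, hsup, le_bot_iff.mp (hFI ▸ inf_le_inf_right I inf_le_left),
    finrank_orthogonal_eq_two_mul_finrank_inf_add hB hdimF hsup,
    fun v hv w hw => hFiso v hv.1 w hw.1,
    fun v hv hvI => hFpos v hv.1 fun hv0 => hvI (hv0 ▸ I.zero_mem)⟩

/-- Let `F ⊆ V_ℂ` be a point of the Siegel space `H(V)` (a `g`-dimensional `a_ℂ`-isotropic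
subspace on which `h` is positive definite) and `I ⊆ V` a nonzero (rational) isotropic
subspace, with complexification `I_ℂ ⊆ V_ℂ` (a conjugation-stable subspace). Then the
projection `F → V_ℂ/I_ℂ` is injective (`F ∩ I_ℂ = 0`), the projection `F → V_ℂ/I^⊥_ℂ` is
surjective (`F + I^⊥_ℂ = V_ℂ`), and its kernel `F ∩ I^⊥_ℂ` projects isomorphically onto a
subspace of `(I^⊥/I)_ℂ` of half the dimension of `I^⊥/I` on which the induced form is
isotropic and `h` is positive, i.e. a point of `H(V_I)`. -/
theorem siegel_space_boundary_projection
    (g : ℕ) (W : Type*) [AddCommGroup W] [Module ℂ W] [FiniteDimensional ℂ W]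
    (hdim : finrank ℂ W = 2 * g)
    (σ : W →ₛₗ[starRingEnd ℂ] W) (hσ : ∀ w, σ (σ w) = w)
    (aC : W →ₗ[ℂ] W →ₗ[ℂ] ℂ)
    (halt : ∀ v, aC v v = 0)
    (hnd : ∀ v, (∀ w, aC v w = 0) → v = 0)
    (hreal : ∀ v w, aC (σ v) (σ w) = star (aC v w))
    (h : W → W → ℂ) (hdef : ∀ v w, h v w = Complex.I * aC v (σ w))
    -- the point `F ∈ H(V)`
    (F : Submodule ℂ W)
    (hFdim : finrank ℂ F = g)
    (hFiso : ∀ v ∈ F, ∀ w ∈ F, aC v w = 0)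
    (hFpos : ∀ v ∈ F, v ≠ 0 → 0 < (h v v).re)
    -- the complexification `I_ℂ` of a nonzero rational isotropic subspace `I ⊆ V`
    (I : Submodule ℂ W) (hI : I ≠ ⊥)
    (hIconj : I.map σ = I)
    (hIiso : ∀ v ∈ I, ∀ w ∈ I, aC v w = 0)
    (Iperp : Submodule ℂ W)
    (hIperp : ∀ x : W, x ∈ Iperp ↔ ∀ w ∈ I, aC x w = 0) :
    -- `F → W/I_ℂ` is injective
    F ⊓ I = ⊥ ∧
    -- `F → W/I^⊥_ℂ` is surjective
    F ⊔ Iperp = ⊤ ∧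
    -- `F ∩ I^⊥_ℂ` maps injectively into `(I^⊥/I)_ℂ`
    (F ⊓ Iperp) ⊓ I = ⊥ ∧
    -- the image has half the dimension of `(I^⊥/I)_ℂ`
    finrank ℂ Iperp = 2 * finrank ℂ ↥(F ⊓ Iperp) + finrank ℂ I ∧
    -- the image is isotropic and `h`-positive, i.e. defines a point of `H(V_I)`
    (∀ v ∈ F ⊓ Iperp, ∀ w ∈ F ⊓ Iperp, aC v w = 0) ∧
    (∀ v ∈ F ⊓ Iperp, v ∉ I → 0 < (h v v).re) :=
  siegel_space_boundary_projection_general g W hdim σ aC halt hnd h hdef F hFdim hFiso hFpos I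
    hIconj hIiso Iperp hIperp
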